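/- Let \(P\) be the transition kernel of an independence Metropolis–Hastings chain with target density \(\pi\) and proposal density \(q\), where there exists \(\beta > 0\) with \(q(\theta)/\pi(\theta) \ge \beta\) for all \(\theta \in \Theta\). Then the chain is uniformly ergodic: \(\|P^n(\theta,\cdot) - \pi\|_{TV} \le (1-\beta)^n\) for all \(\theta\) and \(n \ge 1\). -/

import Mathlib

/-!
Doeblin's argument. The bound `q ≥ β π` makes every row of the independence sampler dominate
`β π`: a proposal from `θ` lands in `dζ` and is accepted with density
`min (q ζ) (π ζ q θ / π θ) ≥ β π ζ`. Since detailed balance makes `π` stationary, one step of the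
chain from any distribution moves a fraction `β` of the mass that is not yet distributed as `π`
onto `π`, so after `n` steps `Pⁿ(θ, ·) = (1 - (1 - β)ⁿ) π + σₙ` with `σₙ` of mass `(1 - β)ⁿ`,
and the distance to `π` is at most that mass.
-/

open MeasureTheory

noncomputable def tvDist {Θ : Type*} [MeasurableSpace Θ] (μ ν : Measure Θ) : ℝ :=
  sSup {r : ℝ | ∃ A : Set Θ, MeasurableSet A ∧ r = |(μ A).toReal - (ν A).toReal|}

/-- Metropolis–Hastings kernel with proposal density `q` (w.r.t. reference measure
`lam`) and acceptance probability `a`, with rejection mass at the current state. -/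
noncomputable def mhKernel {Θ : Type*} [MeasurableSpace Θ] (lam : Measure Θ)
    (q : Θ → ℝ) (a : Θ → Θ → ℝ) (θ : Θ) : Measure Θ :=
  lam.withDensity (fun ζ => ENNReal.ofReal (q ζ * a θ ζ)) +
    ENNReal.ofReal (1 - ∫ t, q t * a θ t ∂lam) • Measure.dirac θ

/-- `ρ Pⁿ` : `n`-step evolution of the measure `ρ` under the kernel `P`. -/
noncomputable def bindIter {Θ : Type*} [MeasurableSpace Θ]
    (ρ : Measure Θ) (P : Θ → Measure Θ) : ℕ → Measure Θ
  | 0 => ρ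
  | n + 1 => (bindIter ρ P n).bind P

open Set Function
open scoped ENNReal

namespace MeasureTheory.Measure

variable {α β : Type*} [MeasurableSpace α] [MeasurableSpace β]

lemma bind_add {f : α → Measure β} (hf : Measurable f) (μ ν : Measure α) :
    (μ + ν).bind f = μ.bind f + ν.bind f := by
  ext s hs
  simp only [bind_apply hs hf.aemeasurable, add_apply, lintegral_add_measure]

lemma bind_apply_univ {f : α → Measure β} (hf : Measurable f)
    (hf1 : ∀ a, IsProbabilityMeasure (f a)) (μ : Measure α) :
    μ.bind f univ = μ univ := by
  simp [bind_apply MeasurableSet.univ hf.aemeasurable]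

lemma exists_bind_eq_smul_add {f : α → Measure β} (hf : Measurable f)
    (hf1 : ∀ a, IsProbabilityMeasure (f a)) {ν : Measure β} [IsProbabilityMeasure ν]
    {b : ℝ≥0∞} (hminor : ∀ a, b • ν ≤ f a) (μ : Measure α) [IsFiniteMeasure μ] :
    ∃ σ : Measure β, μ.bind f = (b * μ univ) • ν + σ ∧ σ univ = (1 - b) * μ univ := by
  have hle : (b * μ univ) • ν ≤ μ.bind f := le_iff.2 fun s hs => by
    calc (b * μ univ) • ν s = ∫⁻ _, (b • ν) s ∂μ := by
          simp only [smul_apply, smul_eq_mul, lintegral_const]; ring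
      _ ≤ ∫⁻ a, f a s ∂μ := lintegral_mono fun a => hminor a s
      _ = μ.bind f s := (bind_apply hs hf.aemeasurable).symm
  have : IsFiniteMeasure (μ.bind f) := ⟨by rw [bind_apply_univ hf hf1]; exact measure_lt_top _ _⟩
  have : IsFiniteMeasure ((b * μ univ) • ν) := isFiniteMeasure_of_le _ hle
  refine ⟨μ.bind f - (b * μ univ) • ν, by rw [add_comm, sub_add_cancel_of_le hle], ?_⟩
  rw [sub_apply MeasurableSet.univ hle, bind_apply_univ hf hf1, smul_apply, smul_eq_mul,
    measure_univ (μ := ν), mul_one, ENNReal.sub_mul fun _ _ => measure_ne_top μ univ, one_mul]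

end MeasureTheory.Measure

section Doeblin

variable {α : Type*} [MeasurableSpace α] {P : α → Measure α} {π : Measure α}
  [IsProbabilityMeasure π] {β : ℝ}

lemma bindIter_eq_smul_add (hP : Measurable P) (hP1 : ∀ a, IsProbabilityMeasure (P a))
    (hπ : π.bind P = π) (hminor : ∀ a, ENNReal.ofReal β • π ≤ P a) (hβ0 : 0 ≤ β)
    (hβ1 : β ≤ 1) (ρ : Measure α) [IsProbabilityMeasure ρ] (n : ℕ) :
    ∃ σ : Measure α, bindIter ρ P n = ENNReal.ofReal (1 - (1 - β) ^ n) • π + σ ∧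
      σ univ = ENNReal.ofReal ((1 - β) ^ n) := by
  induction n with
  | zero => exact ⟨ρ, by simp [bindIter], by simp⟩
  | succ n ih =>
    obtain ⟨σ, hρσ, hσ⟩ := ih
    have : IsFiniteMeasure σ := ⟨by simp [hσ]⟩
    obtain ⟨σ', hσσ', hσ'⟩ := Measure.exists_bind_eq_smul_add hP hP1 hminor σ
    have hc0 : 0 ≤ (1 - β) ^ n := pow_nonneg (by linarith) n
    have hc1 : (1 - β) ^ n ≤ 1 := pow_le_one₀ (by linarith) (by linarith)
    refine ⟨σ', ?_, ?_⟩
    · rw [bindIter, hρσ, Measure.bind_add hP, Measure.bind_smul, hπ, hσσ', ← add_assoc,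
        ← add_smul, hσ, ← ENNReal.ofReal_mul hβ0, ← ENNReal.ofReal_add (by linarith) (by positivity)]
      congr 3
      ring
    · rw [hσ', hσ, ← ENNReal.ofReal_one, ← ENNReal.ofReal_sub _ hβ0,
        ← ENNReal.ofReal_mul (by linarith), pow_succ']

lemma tvDist_smul_add_le {σ : Measure α} {x : ℝ} (hx0 : 0 ≤ x) (hx1 : x ≤ 1)
    (hσ : σ univ = ENNReal.ofReal x) :
    tvDist (ENNReal.ofReal (1 - x) • π + σ) π ≤ x := by
  refine Real.sSup_le ?_ hx0
  rintro r ⟨A, -, rfl⟩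
  have hσA : σ A ≤ ENNReal.ofReal x := hσ ▸ measure_mono (subset_univ A)
  have hs : (σ A).toReal ≤ x := ENNReal.toReal_le_of_le_ofReal hx0 hσA
  have hp : (π A).toReal ≤ 1 := ENNReal.toReal_le_of_le_ofReal zero_le_one (by simp [prob_le_one])
  have hs0 : 0 ≤ (σ A).toReal := ENNReal.toReal_nonneg
  have hp0 : 0 ≤ (π A).toReal := ENNReal.toReal_nonneg
  -- `μ A - π A = σ A - x π A` is a difference of two numbers in `[0, x]`.
  rw [Measure.add_apply, Measure.smul_apply, smul_eq_mul,
    ENNReal.toReal_add (by finiteness) (ne_top_of_le_ne_top ENNReal.ofReal_ne_top hσA),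
    ENNReal.toReal_mul, ENNReal.toReal_ofReal (by linarith), abs_le]
  constructor <;> nlinarith

theorem tvDist_bindIter_le (hP : Measurable P) (hP1 : ∀ a, IsProbabilityMeasure (P a))
    (hπ : π.bind P = π) (hminor : ∀ a, ENNReal.ofReal β • π ≤ P a) (hβ0 : 0 ≤ β)
    (hβ1 : β ≤ 1) (ρ : Measure α) [IsProbabilityMeasure ρ] (n : ℕ) :
    tvDist (bindIter ρ P n) π ≤ (1 - β) ^ n := by
  obtain ⟨σ, hρσ, hσ⟩ := bindIter_eq_smul_add hP hP1 hπ hminor hβ0 hβ1 ρ n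
  rw [hρσ]
  exact tvDist_smul_add_le (pow_nonneg (by linarith) n)
    (pow_le_one₀ (by linarith) (by linarith)) hσ

end Doeblin

section MetropolisHastings

variable {Θ : Type*} [MeasurableSpace Θ] (lam : Measure Θ) (q : Θ → ℝ) (a : Θ → Θ → ℝ)

noncomputable def acceptProb (θ : Θ) : ℝ := ∫ ζ, q ζ * a θ ζ ∂lam

variable {lam q a}

lemma mhKernel_apply (θ : Θ) {A : Set Θ} (hA : MeasurableSet A) :
    mhKernel lam q a θ A = ∫⁻ ζ in A, ENNReal.ofReal (q ζ * a θ ζ) ∂lam +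
      ENNReal.ofReal (1 - acceptProb lam q a θ) * A.indicator 1 θ := by
  rw [mhKernel, Measure.add_apply, withDensity_apply _ hA, Measure.smul_apply,
    Measure.dirac_apply' _ hA, smul_eq_mul, acceptProb]

lemma measurable_mul_accept (hq : Measurable q) (ha : Measurable (uncurry a)) (θ : Θ) :
    Measurable fun ζ => q ζ * a θ ζ :=
  hq.mul (ha.comp measurable_prodMk_left)

lemma integrable_mul_accept (hqint : Integrable q lam) (ha : Measurable (uncurry a))
    (ha0 : ∀ θ ζ, 0 ≤ a θ ζ) (ha1 : ∀ θ ζ, a θ ζ ≤ 1) (θ : Θ) :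
    Integrable (fun ζ => q ζ * a θ ζ) lam :=
  hqint.mul_bdd (ha.comp measurable_prodMk_left).aestronglyMeasurable
    (ae_of_all _ fun ζ => (Real.norm_of_nonneg (ha0 θ ζ)).trans_le (ha1 θ ζ))

lemma acceptProb_nonneg (hq0 : ∀ ζ, 0 ≤ q ζ) (ha0 : ∀ θ ζ, 0 ≤ a θ ζ) (θ : Θ) :
    0 ≤ acceptProb lam q a θ :=
  integral_nonneg fun ζ => mul_nonneg (hq0 ζ) (ha0 θ ζ)

lemma acceptProb_le_one (hq0 : ∀ ζ, 0 ≤ q ζ) (hqint : Integrable q lam)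
    (hqone : ∫ ζ, q ζ ∂lam = 1) (ha : Measurable (uncurry a)) (ha0 : ∀ θ ζ, 0 ≤ a θ ζ)
    (ha1 : ∀ θ ζ, a θ ζ ≤ 1) (θ : Θ) :
    acceptProb lam q a θ ≤ 1 :=
  hqone ▸ integral_mono (integrable_mul_accept hqint ha ha0 ha1 θ) hqint
    fun ζ => mul_le_of_le_one_right (hq0 ζ) (ha1 θ ζ)

lemma lintegral_ofReal_mul_accept (hq0 : ∀ ζ, 0 ≤ q ζ) (hqint : Integrable q lam)
    (ha : Measurable (uncurry a)) (ha0 : ∀ θ ζ, 0 ≤ a θ ζ) (ha1 : ∀ θ ζ, a θ ζ ≤ 1) (θ : Θ) :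
    ∫⁻ ζ, ENNReal.ofReal (q ζ * a θ ζ) ∂lam = ENNReal.ofReal (acceptProb lam q a θ) :=
  (ofReal_integral_eq_lintegral_ofReal (integrable_mul_accept hqint ha ha0 ha1 θ)
    (ae_of_all _ fun ζ => mul_nonneg (hq0 ζ) (ha0 θ ζ))).symm

lemma isProbabilityMeasure_mhKernel (hq0 : ∀ ζ, 0 ≤ q ζ) (hqint : Integrable q lam)
    (hqone : ∫ ζ, q ζ ∂lam = 1) (ha : Measurable (uncurry a)) (ha0 : ∀ θ ζ, 0 ≤ a θ ζ)
    (ha1 : ∀ θ ζ, a θ ζ ≤ 1) (θ : Θ) :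
    IsProbabilityMeasure (mhKernel lam q a θ) := by
  constructor
  rw [mhKernel_apply θ MeasurableSet.univ, Measure.restrict_univ,
    lintegral_ofReal_mul_accept hq0 hqint ha ha0 ha1, indicator_univ, Pi.one_apply, mul_one,
    ← ENNReal.ofReal_add (acceptProb_nonneg hq0 ha0 θ)
      (sub_nonneg.2 (acceptProb_le_one hq0 hqint hqone ha ha0 ha1 θ)),
    add_sub_cancel, ENNReal.ofReal_one]

lemma measurable_acceptProb [SFinite lam] (hq : Measurable q) (ha : Measurable (uncurry a)) :
    Measurable (acceptProb lam q a) :=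
  ((hq.comp measurable_snd).mul ha).stronglyMeasurable.integral_prod_right.measurable

lemma measurable_mhKernel [SFinite lam] (hq : Measurable q) (ha : Measurable (uncurry a)) :
    Measurable (mhKernel lam q a) := by
  refine Measure.measurable_of_measurable_coe _ fun A hA => ?_
  simp_rw [mhKernel_apply _ hA]
  exact (Measurable.lintegral_prod_right ((hq.comp measurable_snd).mul ha).ennreal_ofReal).add
    ((measurable_const.sub (measurable_acceptProb hq ha)).ennreal_ofReal.mul
      (measurable_const.indicator hA))

theorem mhKernel_bind_withDensity [SFinite lam] {π : Θ → ℝ} (hπ : Measurable π)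
    (hπ0 : ∀ θ, 0 ≤ π θ) (hq : Measurable q) (hq0 : ∀ ζ, 0 ≤ q ζ) (hqint : Integrable q lam)
    (hqone : ∫ ζ, q ζ ∂lam = 1) (ha : Measurable (uncurry a)) (ha0 : ∀ θ ζ, 0 ≤ a θ ζ)
    (ha1 : ∀ θ ζ, a θ ζ ≤ 1)
    (hbalance : ∀ θ ζ, π θ * (q ζ * a θ ζ) = π ζ * (q θ * a ζ θ)) :
    (lam.withDensity fun θ => ENNReal.ofReal (π θ)).bind (mhKernel lam q a) =
      lam.withDensity fun θ => ENNReal.ofReal (π θ) := by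
  have hP := measurable_mhKernel (lam := lam) hq ha
  have hF : Measurable (uncurry fun θ ζ => ENNReal.ofReal (π θ * (q ζ * a θ ζ))) :=
    ((hπ.comp measurable_fst).mul ((hq.comp measurable_snd).mul ha)).ennreal_ofReal
  have hflow : ∀ ζ, ∫⁻ θ, ENNReal.ofReal (π θ * (q ζ * a θ ζ)) ∂lam =
      ENNReal.ofReal (π ζ) * ENNReal.ofReal (acceptProb lam q a ζ) := fun ζ => by
    simp_rw [hbalance _ ζ, ENNReal.ofReal_mul (hπ0 ζ)]
    rw [lintegral_const_mul _ (measurable_mul_accept hq ha ζ).ennreal_ofReal,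
      lintegral_ofReal_mul_accept hq0 hqint ha ha0 ha1]
  ext A hA
  calc _ = ∫⁻ θ, ENNReal.ofReal (π θ) * mhKernel lam q a θ A ∂lam := by
        rw [Measure.bind_apply hA hP.aemeasurable, lintegral_withDensity_eq_lintegral_mul _
          hπ.ennreal_ofReal
          (show Measurable fun θ => mhKernel lam q a θ A from (Measure.measurable_coe hA).comp hP)]
        rfl
    _ = ∫⁻ θ, ∫⁻ ζ in A, ENNReal.ofReal (π θ * (q ζ * a θ ζ)) ∂lam ∂lam +
          ∫⁻ θ in A, ENNReal.ofReal (π θ) * ENNReal.ofReal (1 - acceptProb lam q a θ) ∂lam := by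
        rw [← lintegral_indicator hA, ← lintegral_add_left (Measurable.lintegral_prod_right hF)]
        refine lintegral_congr fun θ => ?_
        rw [mhKernel_apply θ hA, mul_add,
          ← lintegral_const_mul _ (measurable_mul_accept hq ha θ).ennreal_ofReal]
        simp_rw [ENNReal.ofReal_mul (hπ0 θ)]
        rcases em (θ ∈ A) with h | h <;> simp [h]
    _ = ∫⁻ ζ in A, ENNReal.ofReal (π ζ) * ENNReal.ofReal (acceptProb lam q a ζ) +
          ENNReal.ofReal (π ζ) * ENNReal.ofReal (1 - acceptProb lam q a ζ) ∂lam := by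
        -- By detailed balance, the accepted flow into `A` is the accepted flow out of `A`.
        rw [lintegral_lintegral_swap hF.aemeasurable]
        simp_rw [hflow]
        exact (lintegral_add_left
          (hπ.ennreal_ofReal.mul (measurable_acceptProb hq ha).ennreal_ofReal) _).symm
    _ = _ := by
        rw [withDensity_apply _ hA]
        refine lintegral_congr fun ζ => ?_
        rw [← mul_add, ← ENNReal.ofReal_add (acceptProb_nonneg hq0 ha0 ζ)
          (sub_nonneg.2 (acceptProb_le_one hq0 hqint hqone ha ha0 ha1 ζ)), add_sub_cancel,
          ENNReal.ofReal_one, mul_one]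

lemma smul_withDensity_le_mhKernel {π : Θ → ℝ} (hπ : Measurable π) {β : ℝ} (hβ : 0 ≤ β)
    (hminor : ∀ θ ζ, β * π ζ ≤ q ζ * a θ ζ) (θ : Θ) :
    ENNReal.ofReal β • lam.withDensity (fun ζ => ENNReal.ofReal (π ζ)) ≤ mhKernel lam q a θ := by
  rw [← withDensity_smul _ hπ.ennreal_ofReal]
  refine (withDensity_mono (ae_of_all _ fun ζ => ?_)).trans (Measure.le_add_right le_rfl)
  rw [Pi.smul_apply, smul_eq_mul, ← ENNReal.ofReal_mul hβ]
  exact ENNReal.ofReal_le_ofReal (hminor θ ζ)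

end MetropolisHastings

section Independence

variable {Θ : Type*} {π q : Θ → ℝ}

noncomputable def indepAccept (π q : Θ → ℝ) (θ ζ : Θ) : ℝ := min 1 (π ζ * q θ / (π θ * q ζ))

lemma measurable_indepAccept [MeasurableSpace Θ] (hπ : Measurable π) (hq : Measurable q) :
    Measurable (uncurry (indepAccept π q)) :=
  measurable_const.min (((hπ.comp measurable_snd).mul (hq.comp measurable_fst)).div
    ((hπ.comp measurable_fst).mul (hq.comp measurable_snd)))

lemma indepAccept_nonneg (hπ0 : ∀ θ, 0 ≤ π θ) (hq0 : ∀ θ, 0 ≤ q θ) (θ ζ : Θ) :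
    0 ≤ indepAccept π q θ ζ :=
  le_min zero_le_one (div_nonneg (mul_nonneg (hπ0 ζ) (hq0 θ)) (mul_nonneg (hπ0 θ) (hq0 ζ)))

lemma indepAccept_le_one (θ ζ : Θ) : indepAccept π q θ ζ ≤ 1 := min_le_left _ _

lemma mul_mul_indepAccept_eq_min (hπ : ∀ θ, 0 < π θ) (hq : ∀ θ, 0 < q θ) (θ ζ : Θ) :
    π θ * (q ζ * indepAccept π q θ ζ) = min (π θ * q ζ) (π ζ * q θ) := by
  rw [indepAccept, mul_min_of_nonneg _ _ (hq ζ).le, mul_one, mul_min_of_nonneg _ _ (hπ θ).le]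
  congr 1
  field_simp [(hπ θ).ne', (hq ζ).ne']

lemma indepAccept_detailedBalance (hπ : ∀ θ, 0 < π θ) (hq : ∀ θ, 0 < q θ) (θ ζ : Θ) :
    π θ * (q ζ * indepAccept π q θ ζ) = π ζ * (q θ * indepAccept π q ζ θ) := by
  rw [mul_mul_indepAccept_eq_min hπ hq, mul_mul_indepAccept_eq_min hπ hq, min_comm]

lemma le_mul_indepAccept (hπ : ∀ θ, 0 < π θ) (hq : ∀ θ, 0 < q θ) {β : ℝ}
    (hratio : ∀ θ, β ≤ q θ / π θ) (θ ζ : Θ) :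
    β * π ζ ≤ q ζ * indepAccept π q θ ζ := by
  have hβ : ∀ θ, β * π θ ≤ q θ := fun θ => (le_div_iff₀ (hπ θ)).1 (hratio θ)
  refine le_of_mul_le_mul_left ?_ (hπ θ)
  rw [mul_mul_indepAccept_eq_min hπ hq]
  exact le_min (by nlinarith [hβ ζ, hπ θ]) (by nlinarith [hβ θ, hπ ζ])

end Independence

lemma isProbabilityMeasure_withDensity_ofReal {α : Type*} [MeasurableSpace α] {μ : Measure α}
    {f : α → ℝ} (hf0 : ∀ x, 0 ≤ f x) (hfint : Integrable f μ) (hfone : ∫ x, f x ∂μ = 1) :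
    IsProbabilityMeasure (μ.withDensity fun x => ENNReal.ofReal (f x)) := by
  constructor
  rw [withDensity_apply _ MeasurableSet.univ, Measure.restrict_univ,
    ← ofReal_integral_eq_lintegral_ofReal hfint (ae_of_all _ hf0), hfone, ENNReal.ofReal_one]

theorem stmt14 {Θ : Type*} [MeasurableSpace Θ] (lam : Measure Θ) [SigmaFinite lam]
    (π q : Θ → ℝ) (hπmeas : Measurable π) (hqmeas : Measurable q)
    (hπpos : ∀ θ, 0 < π θ) (hqpos : ∀ θ, 0 < q θ)
    (hπint : Integrable π lam) (hqint : Integrable q lam)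
    (hπone : ∫ θ, π θ ∂lam = 1) (hqone : ∫ θ, q θ ∂lam = 1)
    (β : ℝ) (hβ : 0 < β) (hratio : ∀ θ, β ≤ q θ / π θ) :
    ∀ (θ : Θ) (n : ℕ), 1 ≤ n →
      tvDist
        (bindIter (Measure.dirac θ)
          (mhKernel lam q (fun θ' ζ => min 1 ((π ζ * q θ') / (π θ' * q ζ)))) n)
        (lam.withDensity fun t => ENNReal.ofReal (π t))
      ≤ (1 - β) ^ n := by
  intro θ n _
  have hπ0 : ∀ θ, 0 ≤ π θ := fun θ => (hπpos θ).le
  have hq0 : ∀ θ, 0 ≤ q θ := fun θ => (hqpos θ).le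
  have := isProbabilityMeasure_withDensity_ofReal hπ0 hπint hπone
  have ha := measurable_indepAccept hπmeas hqmeas
  have hP1 := isProbabilityMeasure_mhKernel hq0 hqint hqone ha (indepAccept_nonneg hπ0 hq0)
    indepAccept_le_one
  have hminor := smul_withDensity_le_mhKernel (lam := lam) hπmeas hβ.le
    (le_mul_indepAccept hπpos hqpos hratio)
  have hβ1 : β ≤ 1 := by
    simpa [ENNReal.ofReal_le_one] using (hminor θ) univ
  exact tvDist_bindIter_le (measurable_mhKernel hqmeas ha) hP1
    (mhKernel_bind_withDensity hπmeas hπ0 hqmeas hq0 hqint hqone ha (indepAccept_nonneg hπ0 hq0)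
      indepAccept_le_one (indepAccept_detailedBalance hπpos hqpos))
    hminor hβ.le hβ1 (Measure.dirac θ) n
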